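/- Let φ satisfy the shape assumption, let K ∈ ℕ₊, δ ∈ (0, 1/(12K²)), ε ∈ (0,1), and let β ≥ 2C₁/(δε) in the Heaviside-like case (respectively β ≥ 2C₂/(δε) in the ReLU-like case). Then the univariate weight functions w₁ = w^{β,δ,K}_{φ,1} and w₂ = w^{β,δ,K}_{φ,2} satisfy: (i) (partition of unity) w₁(x) + w₂(x) = 1 for all x ∈ [0,1]; (ii) (locally quasi-vanishing) |w_i(x)| ≤ ε for all x ∈ Ω_band^{K,i}(2δ), i = 1, 2; (iii) (boundedness) sup_{x ∈ [0,1]} |w_i(x)| ≤ 2C₁ + 3 for i = 1, 2 in the Heaviside-like case, and sup_{x ∈ [0,1]} |w_i(x)| ≤ 3 in the ReLU-like case. -/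

import Mathlib

open scoped BigOperators

/-- Heaviside-like activation: `|φ(t) − H(t)| ≤ C₁ · min{1, 1/|t|}` for all `t`. -/
def HeavisideLike (φ : ℝ → ℝ) (C₁ : ℝ) : Prop :=
  0 < C₁ ∧ (∀ t : ℝ, |φ t - (if 0 ≤ t then 1 else 0)| ≤ C₁) ∧
    ∀ t : ℝ, t ≠ 0 → |φ t - (if 0 ≤ t then 1 else 0)| ≤ C₁ / |t|

/-- ReLU-like activation: `|φ(t) − max{t,0}| ≤ C₂` for all `t`. -/
def ReLULike (φ : ℝ → ℝ) (C₂ : ℝ) : Prop :=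
  0 < C₂ ∧ ∀ t : ℝ, |φ t - max t 0| ≤ C₂

/-- Shape assumption: `φ` is Heaviside-like or ReLU-like. -/
def ShapeAct (φ : ℝ → ℝ) : Prop :=
  (∃ C₁, HeavisideLike φ C₁) ∨ (∃ C₂, ReLULike φ C₂)

/-- The basis function `B_φ^{β,δ,K}` in the Heaviside-like case. -/
noncomputable def basisH (φ : ℝ → ℝ) (β δ : ℝ) (K : ℕ) (x : ℝ) : ℝ :=
  φ (β * (x - 3 * δ)) - φ (β * (x + 3 * δ - ((K : ℝ) ^ 2)⁻¹))

/-- The basis function `B_φ^{β,δ,K}` in the ReLU-like case. -/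
noncomputable def basisR (φ : ℝ → ℝ) (β δ : ℝ) (K : ℕ) (x : ℝ) : ℝ :=
  (1 / (2 * δ * β)) *
    (φ (β * (x - 2 * δ)) - φ (β * (x - 4 * δ)) -
      φ (β * (x - ((K : ℝ) ^ 2)⁻¹ + 4 * δ)) + φ (β * (x - ((K : ℝ) ^ 2)⁻¹ + 2 * δ)))

/-- The primary univariate weight function built from a basis function `Bf`:
`w₁(x) = Bf(x − k/K²)` for `x ∈ [k/K², (k+1)/K²)`, with `w₁(1) = w₁(0)`. -/
noncomputable def weight1 (Bf : ℝ → ℝ) (K : ℕ) (x : ℝ) : ℝ :=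
  Bf (x - (⌊(K : ℝ) ^ 2 * x⌋ : ℝ) / (K : ℝ) ^ 2)

/-- The band region `Ω_band^{K,1}(η) = (∪_{k=0}^{K²} [k/K² − η, k/K² + η]) ∩ [0,1]`. -/
def band1 (K : ℕ) (η : ℝ) : Set ℝ :=
  (⋃ k ∈ Finset.range (K ^ 2 + 1),
    Set.Icc ((k : ℝ) / (K : ℝ) ^ 2 - η) ((k : ℝ) / (K : ℝ) ^ 2 + η)) ∩ Set.Icc 0 1

/-- The band region `Ω_band^{K,2}(η) = ∪_{k=0}^{K²−1} [(2k+1)/(2K²) − η, (2k+1)/(2K²) + η]`. -/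
def band2 (K : ℕ) (η : ℝ) : Set ℝ :=
  ⋃ k ∈ Finset.range (K ^ 2),
    Set.Icc ((2 * (k : ℝ) + 1) / (2 * (K : ℝ) ^ 2) - η)
      ((2 * (k : ℝ) + 1) / (2 * (K : ℝ) ^ 2) + η)


private lemma fract_bounds (K : ℕ) (hK : 0 < K) (x : ℝ) :
    0 ≤ x - (⌊(K:ℝ)^2 * x⌋ : ℝ)/(K:ℝ)^2 ∧
      x - (⌊(K:ℝ)^2 * x⌋ : ℝ)/(K:ℝ)^2 < ((K:ℝ)^2)⁻¹ := by
  have hK2 : (0:ℝ) < (K:ℝ)^2 := by positivity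
  have h1 := Int.floor_le ((K:ℝ)^2 * x)
  have h2 := Int.lt_floor_add_one ((K:ℝ)^2 * x)
  have hd : (⌊(K:ℝ)^2 * x⌋ : ℝ)/(K:ℝ)^2 = ((K:ℝ)^2 * x - ((K:ℝ)^2 * x - ⌊(K:ℝ)^2 * x⌋))/(K:ℝ)^2 := by ring
  constructor
  · rw [sub_nonneg, div_le_iff₀ hK2]
    exact le_trans h1 (le_of_eq (mul_comm _ _))
  · rw [sub_lt_iff_lt_add, inv_eq_one_div, ← add_div, lt_div_iff₀ hK2, mul_comm]
    linarith

private lemma band1_fract (K : ℕ) (hK : 0 < K) (δ : ℝ) (hδ0 : 0 < δ)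
    (hδ : δ < 1 / (12 * (K:ℝ)^2)) (x : ℝ) (hx : x ∈ band1 K (2*δ)) :
    x - (⌊(K:ℝ)^2 * x⌋ : ℝ)/(K:ℝ)^2 ≤ 2*δ ∨
      ((K:ℝ)^2)⁻¹ - 2*δ ≤ x - (⌊(K:ℝ)^2 * x⌋ : ℝ)/(K:ℝ)^2 := by
  have hK2 : (0:ℝ) < (K:ℝ)^2 := by positivity
  have h12 : δ * (12 * (K:ℝ)^2) < 1 := (lt_div_iff₀ (by positivity)).mp hδ
  simp only [band1, Set.mem_inter_iff, Set.mem_iUnion, Set.mem_Icc, Finset.mem_range] at hx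
  obtain ⟨⟨k, hkmem, hk1, hk2⟩, hx0, hx1⟩ := hx
  have hk1' : (k:ℝ) - 2*δ*(K:ℝ)^2 ≤ (K:ℝ)^2 * x := by
    have := mul_le_mul_of_nonneg_left hk1 hK2.le
    rw [mul_sub, mul_div_cancel₀ _ (ne_of_gt hK2)] at this
    linarith
  have hk2' : (K:ℝ)^2 * x ≤ (k:ℝ) + 2*δ*(K:ℝ)^2 := by
    have := mul_le_mul_of_nonneg_left hk2 hK2.le
    rw [mul_add, mul_div_cancel₀ _ (ne_of_gt hK2)] at this
    linarith
  rcases le_or_gt (k:ℝ) ((K:ℝ)^2 * x) with h | h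
  · left
    have hfl : ⌊(K:ℝ)^2 * x⌋ = (k:ℤ) := by
      rw [Int.floor_eq_iff]
      push_cast
      exact ⟨h, by nlinarith⟩
    rw [hfl]
    push_cast
    rw [sub_le_iff_le_add]
    calc x ≤ (k:ℝ)/(K:ℝ)^2 + 2*δ := hk2
      _ = 2*δ + (k:ℝ)/(K:ℝ)^2 := by ring
  · right
    have hkpos : 1 ≤ (k:ℝ) := by
      have : (0:ℝ) < (k:ℝ) := lt_of_le_of_lt (mul_nonneg hK2.le hx0) h
      exact_mod_cast Nat.one_le_iff_ne_zero.mpr (by exact_mod_cast Nat.pos_of_ne_zero (by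
        intro hk0; rw [hk0] at this; norm_num at this) |>.ne')
    have hfl : ⌊(K:ℝ)^2 * x⌋ = (k:ℤ) - 1 := by
      rw [Int.floor_eq_iff]
      push_cast
      constructor
      · nlinarith
      · linarith
    rw [hfl]
    push_cast
    have hsub : ((k:ℝ) - 1)/(K:ℝ)^2 = (k:ℝ)/(K:ℝ)^2 - ((K:ℝ)^2)⁻¹ := by
      field_simp
    rw [hsub]
    linarith

private lemma band2_fract (K : ℕ) (hK : 0 < K) (δ : ℝ) (hδ0 : 0 < δ)
    (hδ : δ < 1 / (12 * (K:ℝ)^2)) (x : ℝ) (hx : x ∈ band2 K (2*δ)) :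
    ((K:ℝ)^2)⁻¹/2 - 2*δ ≤ x - (⌊(K:ℝ)^2 * x⌋ : ℝ)/(K:ℝ)^2 ∧
      x - (⌊(K:ℝ)^2 * x⌋ : ℝ)/(K:ℝ)^2 ≤ ((K:ℝ)^2)⁻¹/2 + 2*δ := by
  have hK2 : (0:ℝ) < (K:ℝ)^2 := by positivity
  have h12 : δ * (12 * (K:ℝ)^2) < 1 := (lt_div_iff₀ (by positivity)).mp hδ
  simp only [band2, Set.mem_iUnion, Set.mem_Icc, Finset.mem_range] at hx
  obtain ⟨k, hkmem, hk1, hk2⟩ := hx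
  have hmid : (2*(k:ℝ) + 1)/(2*(K:ℝ)^2) = (k:ℝ)/(K:ℝ)^2 + ((K:ℝ)^2)⁻¹/2 := by
    field_simp
  rw [hmid] at hk1 hk2
  have hinv : ((K:ℝ)^2)⁻¹ * (K:ℝ)^2 = 1 := inv_mul_cancel₀ (ne_of_gt hK2)
  have hfl : ⌊(K:ℝ)^2 * x⌋ = (k:ℤ) := by
    rw [Int.floor_eq_iff]
    push_cast
    constructor
    · have := mul_le_mul_of_nonneg_left hk1 hK2.le
      rw [mul_sub, mul_add, mul_div_cancel₀ _ (ne_of_gt hK2)] at this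
      nlinarith
    · have := mul_le_mul_of_nonneg_left hk2 hK2.le
      rw [mul_add, mul_add, mul_div_cancel₀ _ (ne_of_gt hK2)] at this
      nlinarith
  rw [hfl]
  push_cast
  constructor <;> linarith

private lemma max_sub_bounds (a b : ℝ) (h : b ≤ a) :
    0 ≤ max a 0 - max b 0 ∧ max a 0 - max b 0 ≤ a - b := by
  constructor
  · exact sub_nonneg.mpr (max_le_max h le_rfl)
  · rcases le_total b 0 with hb | hb
    · rw [max_eq_right hb]
      rcases le_total a 0 with ha | ha
      · rw [max_eq_right ha]; linarith
      · rw [max_eq_left ha]; linarith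
    · rw [max_eq_left hb, max_eq_left (le_trans hb h)]

private noncomputable def gfun (δ m y : ℝ) : ℝ :=
  (max (y - 2*δ) 0 - max (y - 4*δ) 0 - max (y - m + 4*δ) 0 + max (y - m + 2*δ) 0) / (2*δ)

private lemma gfun_abs_le_one (δ m y : ℝ) (hδ0 : 0 < δ) : |gfun δ m y| ≤ 1 := by
  have hA := max_sub_bounds (y - 2*δ) (y - 4*δ) (by linarith)
  have hB := max_sub_bounds (y - m + 4*δ) (y - m + 2*δ) (by linarith)
  rw [gfun, abs_div, abs_of_pos (by linarith : (0:ℝ) < 2*δ), div_le_one (by linarith)]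
  rw [abs_le]
  constructor <;> [skip; skip] <;>
    · obtain ⟨hA1, hA2⟩ := hA; obtain ⟨hB1, hB2⟩ := hB; linarith

private lemma gfun_zero_left (δ m y : ℝ) (hδ0 : 0 < δ) (hm : 12*δ ≤ m) (hy : y ≤ 2*δ) :
    gfun δ m y = 0 := by
  rw [gfun, max_eq_right (by linarith), max_eq_right (by linarith),
    max_eq_right (by linarith), max_eq_right (by linarith)]
  ring

private lemma gfun_zero_right (δ m y : ℝ) (hδ0 : 0 < δ) (hm : 12*δ ≤ m) (hy : m - 2*δ ≤ y) :
    gfun δ m y = 0 := by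
  rw [gfun, max_eq_left (by linarith), max_eq_left (by linarith),
    max_eq_left (by linarith), max_eq_left (by linarith)]
  ring

private lemma gfun_one (δ m y : ℝ) (hδ0 : 0 < δ) (hm : 12*δ ≤ m)
    (hy1 : m/2 - 2*δ ≤ y) (hy2 : y ≤ m/2 + 2*δ) : gfun δ m y = 1 := by
  rw [gfun, max_eq_left (by linarith), max_eq_left (by linarith),
    max_eq_right (by linarith), max_eq_right (by linarith)]
  field_simp
  ring

set_option maxHeartbeats 1600000 in
/-- **Proposition B.13 (properties of the univariate weight functions)**: with
`w₁ = w^{β,δ,K}_{φ,1}` and `w₂ = 1 − w₁`, assuming `β ≥ 2C₁/(δε)` (Heaviside-like case,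
respectively `β ≥ 2C₂/(δε)` in the ReLU-like case): (i) `w₁ + w₂ = 1` on `[0,1]`;
(ii) `|wᵢ| ≤ ε` on `Ω_band^{K,i}(2δ)`; (iii) `|wᵢ| ≤ 2C₁ + 3` on `[0,1]`
(respectively `|wᵢ| ≤ 3`). -/
theorem univariate_weight_properties (φ : ℝ → ℝ) (hshape : ShapeAct φ)
    (K : ℕ) (hK : 0 < K) (δ : ℝ) (hδ0 : 0 < δ) (hδ : δ < 1 / (12 * (K : ℝ) ^ 2))
    (ε : ℝ) (hε0 : 0 < ε) (hε1 : ε < 1) (β : ℝ) :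
    (∀ C₁ : ℝ, HeavisideLike φ C₁ → 2 * C₁ / (δ * ε) ≤ β →
      (∀ x ∈ Set.Icc (0 : ℝ) 1,
        weight1 (basisH φ β δ K) K x + (1 - weight1 (basisH φ β δ K) K x) = 1) ∧
      (∀ x ∈ band1 K (2 * δ), |weight1 (basisH φ β δ K) K x| ≤ ε) ∧
      (∀ x ∈ band2 K (2 * δ), |1 - weight1 (basisH φ β δ K) K x| ≤ ε) ∧
      (∀ x ∈ Set.Icc (0 : ℝ) 1,
        |weight1 (basisH φ β δ K) K x| ≤ 2 * C₁ + 3 ∧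
        |1 - weight1 (basisH φ β δ K) K x| ≤ 2 * C₁ + 3)) ∧
    (∀ C₂ : ℝ, ReLULike φ C₂ → 2 * C₂ / (δ * ε) ≤ β →
      (∀ x ∈ Set.Icc (0 : ℝ) 1,
        weight1 (basisR φ β δ K) K x + (1 - weight1 (basisR φ β δ K) K x) = 1) ∧
      (∀ x ∈ band1 K (2 * δ), |weight1 (basisR φ β δ K) K x| ≤ ε) ∧
      (∀ x ∈ band2 K (2 * δ), |1 - weight1 (basisR φ β δ K) K x| ≤ ε) ∧
      (∀ x ∈ Set.Icc (0 : ℝ) 1,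
        |weight1 (basisR φ β δ K) K x| ≤ 3 ∧
        |1 - weight1 (basisR φ β δ K) K x| ≤ 3)) := by
  have hK2 : (0:ℝ) < (K:ℝ)^2 := by positivity
  have h12' : δ * (12 * (K:ℝ)^2) < 1 := (lt_div_iff₀ (by positivity)).mp hδ
  have h12 : 12 * δ < ((K:ℝ)^2)⁻¹ := by
    rw [inv_eq_one_div, lt_div_iff₀ hK2]
    nlinarith
  constructor
  · -- Heaviside-like case
    intro C₁ hH hβ
    obtain ⟨hC0, hbd, hdec⟩ := hH
    have hβ0 : 0 < β := lt_of_lt_of_le (by positivity) hβ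
    have hβδ : 0 < β * δ := mul_pos hβ0 hδ0
    have hhalf : C₁ / (β*δ) ≤ ε/2 := by
      rw [div_le_div_iff₀ hβδ two_pos]
      have h2 : 2*C₁ ≤ β*(δ*ε) := (div_le_iff₀ (by positivity)).mp hβ
      nlinarith
    have hneg : ∀ s : ℝ, s ≤ -δ → |φ (β*s)| ≤ ε/2 := by
      intro s hs
      have hts : β*s < 0 := by nlinarith
      have h0 := hdec (β*s) (ne_of_lt hts)
      rw [if_neg (not_le.mpr hts), sub_zero] at h0
      have habs : β*δ ≤ |β*s| := by
        rw [abs_of_neg hts]; nlinarith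
      calc |φ (β*s)| ≤ C₁/|β*s| := h0
        _ ≤ C₁/(β*δ) := by gcongr
        _ ≤ ε/2 := hhalf
    have hpos : ∀ s : ℝ, δ ≤ s → |φ (β*s) - 1| ≤ ε/2 := by
      intro s hs
      have hts : 0 < β*s := by nlinarith
      have h0 := hdec (β*s) (ne_of_gt hts)
      rw [if_pos hts.le] at h0
      have habs : β*δ ≤ |β*s| := by
        rw [abs_of_pos hts]; nlinarith
      calc |φ (β*s) - 1| ≤ C₁/|β*s| := h0
        _ ≤ C₁/(β*δ) := by gcongr
        _ ≤ ε/2 := hhalf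
    refine ⟨fun x _ => by ring, ?_, ?_, ?_⟩
    · -- band1
      intro x hx
      obtain ⟨hy0, hy1⟩ := fract_bounds K hK x
      rcases band1_fract K hK δ hδ0 hδ x hx with hy | hy
      · simp only [weight1, basisH]
        set y := x - (⌊(K:ℝ)^2*x⌋:ℝ)/(K:ℝ)^2 with hydef
        clear_value y
        have e1 := hneg (y - 3*δ) (by linarith)
        have e2 := hneg (y + 3*δ - ((K:ℝ)^2)⁻¹) (by linarith)
        rw [abs_le] at e1 e2 ⊢
        constructor <;> linarith [e1.1, e1.2, e2.1, e2.2]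
      · simp only [weight1, basisH]
        set y := x - (⌊(K:ℝ)^2*x⌋:ℝ)/(K:ℝ)^2 with hydef
        clear_value y
        have e1 := hpos (y - 3*δ) (by linarith)
        have e2 := hpos (y + 3*δ - ((K:ℝ)^2)⁻¹) (by linarith)
        rw [abs_le] at e1 e2 ⊢
        constructor <;> linarith [e1.1, e1.2, e2.1, e2.2]
    · -- band2
      intro x hx
      obtain ⟨hy1, hy2⟩ := band2_fract K hK δ hδ0 hδ x hx
      simp only [weight1, basisH]
      set y := x - (⌊(K:ℝ)^2*x⌋:ℝ)/(K:ℝ)^2 with hydef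
      clear_value y
      have e1 := hpos (y - 3*δ) (by linarith)
      have e2 := hneg (y + 3*δ - ((K:ℝ)^2)⁻¹) (by linarith)
      rw [abs_le] at e1 e2 ⊢
      constructor <;> linarith [e1.1, e1.2, e2.1, e2.2]
    · -- bounded
      intro x _
      have hb : ∀ t : ℝ, |φ t| ≤ C₁ + 1 := by
        intro t
        have h0 := hbd t
        rw [abs_le] at h0 ⊢
        split_ifs at h0 <;> constructor <;> linarith [h0.1, h0.2]
      simp only [weight1, basisH]
      set y := x - (⌊(K:ℝ)^2*x⌋:ℝ)/(K:ℝ)^2 with hydef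
      clear_value y
      have h1 := hb (β*(y - 3*δ))
      have h2 := hb (β*(y + 3*δ - ((K:ℝ)^2)⁻¹))
      rw [abs_le] at h1 h2
      constructor <;> rw [abs_le] <;> constructor <;>
        linarith [h1.1, h1.2, h2.1, h2.2]
  · -- ReLU-like case
    intro C₂ hR hβ
    obtain ⟨hC0, hbd⟩ := hR
    have hβ0 : 0 < β := lt_of_lt_of_le (by positivity) hβ
    have hδne : δ ≠ 0 := ne_of_gt hδ0
    have hβne : β ≠ 0 := ne_of_gt hβ0
    have hmax : ∀ s : ℝ, max (β*s) 0 = β * max s 0 := by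
      intro s
      rw [mul_max_of_nonneg _ _ hβ0.le, mul_zero]
    have hkey : ∀ y : ℝ, |basisR φ β δ K y - gfun δ (((K:ℝ)^2)⁻¹) y| ≤ ε := by
      intro y
      have e1 := hbd (β*(y - 2*δ))
      have e2 := hbd (β*(y - 4*δ))
      have e3 := hbd (β*(y - ((K:ℝ)^2)⁻¹ + 4*δ))
      have e4 := hbd (β*(y - ((K:ℝ)^2)⁻¹ + 2*δ))
      have hid : basisR φ β δ K y - gfun δ (((K:ℝ)^2)⁻¹) y
          = (1/(2*δ*β)) * ((φ (β*(y - 2*δ)) - max (β*(y - 2*δ)) 0)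
            - (φ (β*(y - 4*δ)) - max (β*(y - 4*δ)) 0)
            - (φ (β*(y - ((K:ℝ)^2)⁻¹ + 4*δ)) - max (β*(y - ((K:ℝ)^2)⁻¹ + 4*δ)) 0)
            + (φ (β*(y - ((K:ℝ)^2)⁻¹ + 2*δ)) - max (β*(y - ((K:ℝ)^2)⁻¹ + 2*δ)) 0)) := by
        simp only [basisR, gfun, hmax]
        field_simp
        ring
      rw [hid, abs_mul, abs_of_pos (by positivity : (0:ℝ) < 1/(2*δ*β))]
      have h4 : |(φ (β*(y - 2*δ)) - max (β*(y - 2*δ)) 0)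
            - (φ (β*(y - 4*δ)) - max (β*(y - 4*δ)) 0)
            - (φ (β*(y - ((K:ℝ)^2)⁻¹ + 4*δ)) - max (β*(y - ((K:ℝ)^2)⁻¹ + 4*δ)) 0)
            + (φ (β*(y - ((K:ℝ)^2)⁻¹ + 2*δ)) - max (β*(y - ((K:ℝ)^2)⁻¹ + 2*δ)) 0)| ≤ 4*C₂ := by
        rw [abs_le] at e1 e2 e3 e4 ⊢
        constructor <;> linarith [e1.1, e1.2, e2.1, e2.2, e3.1, e3.2, e4.1, e4.2]
      have hfac : (0:ℝ) < 1/(2*δ*β) := by positivity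
      refine le_trans (mul_le_mul_of_nonneg_left h4 hfac.le) ?_
      rw [div_mul_eq_mul_div, one_mul, div_le_iff₀ (by positivity)]
      have h2 : 2*C₂ ≤ β*(δ*ε) := (div_le_iff₀ (by positivity)).mp hβ
      nlinarith
    refine ⟨fun x _ => by ring, ?_, ?_, ?_⟩
    · -- band1
      intro x hx
      obtain ⟨hy0, hy1⟩ := fract_bounds K hK x
      have hkx := hkey (x - (⌊(K:ℝ)^2*x⌋:ℝ)/(K:ℝ)^2)
      simp only [weight1]
      set y := x - (⌊(K:ℝ)^2*x⌋:ℝ)/(K:ℝ)^2 with hydef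
      clear_value y
      rcases band1_fract K hK δ hδ0 hδ x hx with hy | hy <;> rw [← hydef] at hy
      · rw [gfun_zero_left δ _ y hδ0 (by linarith) hy, sub_zero] at hkx
        exact hkx
      · rw [gfun_zero_right δ _ y hδ0 (by linarith) hy, sub_zero] at hkx
        exact hkx
    · -- band2
      intro x hx
      obtain ⟨hy1, hy2⟩ := band2_fract K hK δ hδ0 hδ x hx
      have hkx := hkey (x - (⌊(K:ℝ)^2*x⌋:ℝ)/(K:ℝ)^2)
      simp only [weight1]
      set y := x - (⌊(K:ℝ)^2*x⌋:ℝ)/(K:ℝ)^2 with hydef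
      clear_value y
      rw [gfun_one δ _ y hδ0 (by linarith) hy1 hy2] at hkx
      rw [abs_sub_comm] at hkx
      exact hkx
    · -- bounded
      intro x _
      have hkx := hkey (x - (⌊(K:ℝ)^2*x⌋:ℝ)/(K:ℝ)^2)
      have hgb := gfun_abs_le_one δ (((K:ℝ)^2)⁻¹) (x - (⌊(K:ℝ)^2*x⌋:ℝ)/(K:ℝ)^2) hδ0
      simp only [weight1]
      set y := x - (⌊(K:ℝ)^2*x⌋:ℝ)/(K:ℝ)^2 with hydef
      clear_value y
      rw [abs_le] at hkx hgb
      constructor <;> rw [abs_le] <;> constructor <;>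
        linarith [hkx.1, hkx.2, hgb.1, hgb.2]
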